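/- arXiv:2510.23237 — 2 statements merged into one kernel-verified Lean document; each statement's English description precedes it below -/
import Mathlib

section
/- Let 0 ≤ a, b ≤ 1 and let e₀,e₁,e₂,f₀,f₁,f₂ be positive reals with e₀+e₁+e₂ = 1 and f₀+f₁+f₂ = 1. Let ρ ∈ Matrix (Fin 2) (Fin 2) ℂ be given by ρ = !![r, c; conj c, s] with r,s ≥ 0 real, r+s = 1. Let Û₁ ∈ Matrix (Fin 2 × Fin 2) (Fin 2 × Fin 2) ℂ be the block-diagonal matrix Û₁ = U₁ ⊕ U₂ with U₁ = !![√a, √(1−a); √(1−a), −√a] and U₂ = !![√(1−b), √b; √b, −√(1−b)], and let Û₂ ∈ Matrix (Fin 2 × Fin 3) (Fin 2 × Fin 3) ℂ be the block-diagonal matrix Û₂ = V₀ ⊕ V₁, where V₀ is the 3×3 matrix with columns (√e₀,√e₁,√e₂)ᵀ, (−√e₁/√(e₀+e₁), √e₀/√(e₀+e₁), 0)ᵀ, (−√(e₀e₂)/√(e₀+e₁), −√(e₁e₂)/√(e₀+e₁), √(e₀+e₁))ᵀ, and V₁ is defined identically with f in place of e. Fix y ∈ Fin 3 and let P_y = I₂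 ⊗ |y⟩⟨y|. Define ρ' = Tr₁[Û₁ (ρ ⊗ |0⟩⟨0|) Û₁†] (partial trace over the first tensor factor, where |0⟩⟨0| is the 2×2 matrix with 1 in the (0,0) entry and 0 elsewhere) and σ = Tr₂[P_y Û₂ (ρ' ⊗ |0⟩⟨0|₃) Û₂† P_y] (partial trace over the second (3-dimensional) tensor factor, where |0⟩⟨0|₃ is the 3×3 matrix with 1 in the (0,0) entry and 0 elsewhere). Set N = e_y·(a·r + (1−b)·s) + f_y·((1−a)·r + b·s). Then trace σ = N, and if N > 0, the diagonal entries of σ/N are σ₀₀/N = e_y·(a·r + (1−b)·s)/N and σ₁₁/N = f_y·((1−a)·r + b·s)/N; that is, they coincide with the posterior distribution x_t(j | y) = P(y | j)·(A x_{t−1})(j) / Σ_j P(y | j)·(A x_{t−1})(j) of the hidden Markov model with transition matrix A = !![a, 1−b; 1−a, b], emission probabilities P(y | 0) = e_y, P(y | 1) = f_y, and prior belief x_{t−1} = (r, s)ᵀ. -/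
open Matrix Complex
open scoped Kronecker

/-!
Both gates are controlled unitaries `∑ᵢ |i⟩⟨i| ⊗ Uᵢ` acting on an ancilla prepared in a basis
state `|p⟩`, and conjugating `ρ ⊗ |p⟩⟨p|` by such a gate gives the entries
`ρᵢᵢ' Uᵢ(j,p) conj (Uᵢ'(k,p))`. Tracing out the control register of the first gate leaves
`ρ'ⱼⱼ = ∑ᵢ ρᵢᵢ |Uᵢ(j,0)|²`, which is `(A x)ⱼ` because the first columns of `U₁, U₂` are
`(√a, √(1-a))` and `(√(1-b), √b)`. In the second gate the ancilla is the target; projecting it on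
`|y⟩` and tracing it out gives `σⱼⱼ = ρ'ⱼⱼ |Vⱼ(y,0)|² = P(y | j) ρ'ⱼⱼ`.
-/

namespace Matrix

variable {R ι m n : Type*}

def partialTraceLeft [AddCommMonoid R] [Fintype ι] (M : Matrix (ι × m) (ι × n) R) :
    Matrix m n R :=
  of fun j k => ∑ i, M (i, j) (i, k)

def partialTraceRight [AddCommMonoid R] [Fintype n] (M : Matrix (ι × n) (m × n) R) :
    Matrix ι m R :=
  of fun j k => ∑ z, M (j, z) (k, z)

/-- The block-diagonal matrix `U₀ ⊕ U₁ ⊕ ⋯ = ∑ᵢ |i⟩⟨i| ⊗ Uᵢ`: the gate applying `Uᵢ` to the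
second register when the first (control) register is in the basis state `i`. -/
def controlled [Fintype ι] [DecidableEq ι] [Semiring R] (U : ι → Matrix m n R) :
    Matrix (ι × m) (ι × n) R :=
  ∑ i, single i i 1 ⊗ₖ U i

section Semiring

variable [Semiring R]

theorem controlled_fin_two (U₀ U₁ : Matrix m n R) :
    controlled ![U₀, U₁] = single 0 0 1 ⊗ₖ U₀ + single 1 1 1 ⊗ₖ U₁ := by
  simp [controlled, Fin.sum_univ_two]

variable [Fintype ι] [DecidableEq ι]

theorem controlled_apply (U : ι → Matrix m n R) (i i' : ι) (j : m) (k : n) :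
    controlled U (i, j) (i', k) = if i = i' then U i j k else 0 := by
  simp [controlled, sum_apply, single_apply, ite_and]

theorem one_kronecker_eq_controlled (B : Matrix m n R) :
    (1 : Matrix ι ι R) ⊗ₖ B = controlled fun _ => B := by
  ext ⟨i, j⟩ ⟨i', k⟩
  simp [controlled_apply, one_apply]

end Semiring

section StarRing

variable [CommSemiring R] [StarRing R] [Fintype ι] [DecidableEq ι] [Fintype m]

theorem controlled_mul_mul_conjTranspose_apply (U V : ι → Matrix m m R)
    (M : Matrix (ι × m) (ι × m) R) (i i' : ι) (j k : m) :
    (controlled U * M * (controlled V)ᴴ) (i, j) (i', k) =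
      ∑ j', ∑ k', U i j j' * M (i, j') (i', k') * star (V i' k k') := by
  simp [mul_apply, Fintype.sum_prod_type, controlled_apply, Finset.sum_mul, ite_mul,
    apply_ite star, mul_ite, Finset.sum_ite_irrel]
  exact Finset.sum_comm

theorem controlled_conj_kronecker_single_apply [DecidableEq m] (U : ι → Matrix m m R)
    (ρ : Matrix ι ι R) (p : m) (i i' : ι) (j k : m) :
    (controlled U * (ρ ⊗ₖ single p p 1) * (controlled U)ᴴ : Matrix (ι × m) (ι × m) R)
      (i, j) (i', k) = ρ i i' * U i j p * star (U i' k p) := by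
  simp [controlled_mul_mul_conjTranspose_apply, single_apply, ite_and]
  ring

theorem partialTraceLeft_controlled_conj_kronecker_single [DecidableEq m] (U : ι → Matrix m m R)
    (ρ : Matrix ι ι R) (p j k : m) :
    partialTraceLeft (controlled U * (ρ ⊗ₖ single p p 1) * (controlled U)ᴴ) j k =
      ∑ i, ρ i i * U i j p * star (U i k p) := by
  simp only [partialTraceLeft, of_apply, controlled_conj_kronecker_single_apply]

theorem partialTraceRight_one_kronecker_single_conj [DecidableEq m]
    (M : Matrix (ι × m) (ι × m) R) (y : m) (j k : ι) :
    partialTraceRight ((1 ⊗ₖ single y y 1) * M * (1 ⊗ₖ single y y 1)) j k = M (j, y) (k, y) := by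
  have hP : ((1 : Matrix ι ι R) ⊗ₖ single y y 1)ᴴ = 1 ⊗ₖ single y y 1 := by
    simp [conjTranspose_kronecker]
  nth_rewrite 2 [← hP]
  rw [one_kronecker_eq_controlled]
  simp [partialTraceRight, controlled_mul_mul_conjTranspose_apply, single_apply, ite_and,
    apply_ite star]

end StarRing

end Matrix

theorem Complex.ofReal_sqrt_mul_star {x : ℝ} (hx : 0 ≤ x) :
    (√x : ℂ) * star (√x : ℂ) = x := by
  rw [Complex.star_def, Complex.conj_ofReal, ← Complex.ofReal_mul, Real.mul_self_sqrt hx]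

theorem HMM_quantum_circuit_posterior_general
    (a b : ℝ) (ha0 : 0 ≤ a) (ha1 : a ≤ 1) (hb0 : 0 ≤ b) (hb1 : b ≤ 1)
    (e₀ e₁ e₂ f₀ f₁ f₂ : ℝ)
    (he₀ : 0 < e₀) (he₁ : 0 < e₁) (he₂ : 0 < e₂)
    (hf₀ : 0 < f₀) (hf₁ : 0 < f₁) (hf₂ : 0 < f₂)
    (r s : ℝ) (c : ℂ)
    (ρ : Matrix (Fin 2) (Fin 2) ℂ)
    (hρ : ρ = !![(r : ℂ), c; (starRingEnd ℂ) c, (s : ℂ)])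
    (U₁ U₂ : Matrix (Fin 2) (Fin 2) ℂ)
    (hU₁ : U₁ = !![(Real.sqrt a : ℂ), (Real.sqrt (1 - a) : ℂ);
                   (Real.sqrt (1 - a) : ℂ), -(Real.sqrt a : ℂ)])
    (hU₂ : U₂ = !![(Real.sqrt (1 - b) : ℂ), (Real.sqrt b : ℂ);
                   (Real.sqrt b : ℂ), -(Real.sqrt (1 - b) : ℂ)])
    (Uhat₁ : Matrix (Fin 2 × Fin 2) (Fin 2 × Fin 2) ℂ)
    (hUhat₁ : Uhat₁ = (Matrix.single (0 : Fin 2) (0 : Fin 2) (1 : ℂ)) ⊗ₖ U₁ +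
                      (Matrix.single (1 : Fin 2) (1 : Fin 2) (1 : ℂ)) ⊗ₖ U₂)
    (V₀ V₁ : Matrix (Fin 3) (Fin 3) ℂ)
    (hV₀ : V₀ = !![((Real.sqrt e₀ : ℝ) : ℂ),
                   ((-(Real.sqrt e₁) / Real.sqrt (e₀ + e₁) : ℝ) : ℂ),
                   ((-(Real.sqrt (e₀ * e₂)) / Real.sqrt (e₀ + e₁) : ℝ) : ℂ);
                   ((Real.sqrt e₁ : ℝ) : ℂ),
                   ((Real.sqrt e₀ / Real.sqrt (e₀ + e₁) : ℝ) : ℂ),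
                   ((-(Real.sqrt (e₁ * e₂)) / Real.sqrt (e₀ + e₁) : ℝ) : ℂ);
                   ((Real.sqrt e₂ : ℝ) : ℂ), (0 : ℂ),
                   ((Real.sqrt (e₀ + e₁) : ℝ) : ℂ)])
    (hV₁ : V₁ = !![((Real.sqrt f₀ : ℝ) : ℂ),
                   ((-(Real.sqrt f₁) / Real.sqrt (f₀ + f₁) : ℝ) : ℂ),
                   ((-(Real.sqrt (f₀ * f₂)) / Real.sqrt (f₀ + f₁) : ℝ) : ℂ);
                   ((Real.sqrt f₁ : ℝ) : ℂ),
                   ((Real.sqrt f₀ / Real.sqrt (f₀ + f₁) : ℝ) : ℂ),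
                   ((-(Real.sqrt (f₁ * f₂)) / Real.sqrt (f₀ + f₁) : ℝ) : ℂ);
                   ((Real.sqrt f₂ : ℝ) : ℂ), (0 : ℂ),
                   ((Real.sqrt (f₀ + f₁) : ℝ) : ℂ)])
    (Uhat₂ : Matrix (Fin 2 × Fin 3) (Fin 2 × Fin 3) ℂ)
    (hUhat₂ : Uhat₂ = (Matrix.single (0 : Fin 2) (0 : Fin 2) (1 : ℂ)) ⊗ₖ V₀ +
                      (Matrix.single (1 : Fin 2) (1 : Fin 2) (1 : ℂ)) ⊗ₖ V₁)
    (y : Fin 3)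
    (Py : Matrix (Fin 2 × Fin 3) (Fin 2 × Fin 3) ℂ)
    (hPy : Py = (1 : Matrix (Fin 2) (Fin 2) ℂ) ⊗ₖ Matrix.single y y (1 : ℂ))
    (ρ' : Matrix (Fin 2) (Fin 2) ℂ)
    (hρ' : ρ' = fun j k => ∑ i : Fin 2,
      (Uhat₁ * (ρ ⊗ₖ Matrix.single (0 : Fin 2) (0 : Fin 2) (1 : ℂ)) * Uhat₁ᴴ)
        (i, j) (i, k))
    (σ : Matrix (Fin 2) (Fin 2) ℂ)
    (hσ : σ = fun j k => ∑ z : Fin 3,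
      (Py * (Uhat₂ * (ρ' ⊗ₖ Matrix.single (0 : Fin 3) (0 : Fin 3) (1 : ℂ)) *
        Uhat₂ᴴ) * Py) (j, z) (k, z))
    (N : ℝ)
    (hN : N = ![e₀, e₁, e₂] y * (a * r + (1 - b) * s) +
              ![f₀, f₁, f₂] y * ((1 - a) * r + b * s)) :
    σ.trace = (N : ℂ) ∧
    (0 < N →
      σ 0 0 / (N : ℂ) = ((![e₀, e₁, e₂] y * (a * r + (1 - b) * s) : ℝ) : ℂ) / (N : ℂ) ∧
      σ 1 1 / (N : ℂ) = ((![f₀, f₁, f₂] y * ((1 - a) * r + b * s) : ℝ) : ℂ) / (N : ℂ)) := by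
  rw [← controlled_fin_two] at hUhat₁ hUhat₂
  have hρ'_diag (j : Fin 2) :
      ρ' j j = ∑ i, ρ i i * ![U₁, U₂] i j 0 * star (![U₁, U₂] i j 0) := by
    rw [hρ', hUhat₁]
    exact partialTraceLeft_controlled_conj_kronecker_single _ ρ 0 j j
  have hσ_diag (j : Fin 2) : σ j j = ρ' j j * ![V₀, V₁] j y 0 * star (![V₀, V₁] j y 0) := by
    rw [hσ, hPy, hUhat₂]
    exact (partialTraceRight_one_kronecker_single_conj _ y j j).trans
      (controlled_conj_kronecker_single_apply _ _ _ _ _ _ _)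
  have hV₀y : V₀ y 0 = √(![e₀, e₁, e₂] y) := by fin_cases y <;> simp [hV₀]
  have hV₁y : V₁ y 0 = √(![f₀, f₁, f₂] y) := by fin_cases y <;> simp [hV₁]
  have he : 0 ≤ ![e₀, e₁, e₂] y := by fin_cases y <;> simp [he₀.le, he₁.le, he₂.le]
  have hf : 0 ≤ ![f₀, f₁, f₂] y := by fin_cases y <;> simp [hf₀.le, hf₁.le, hf₂.le]
  have hσ₀ : σ 0 0 = ((![e₀, e₁, e₂] y * (a * r + (1 - b) * s) : ℝ) : ℂ) := by
    simp only [hσ_diag, hρ'_diag, Fin.sum_univ_two, hρ, hU₁, hU₂, hV₀y, of_apply, cons_val',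
      cons_val_zero, cons_val_one, empty_val', cons_val_fin_one]
    simp only [mul_assoc, Complex.ofReal_sqrt_mul_star ha0, Complex.ofReal_sqrt_mul_star he,
      Complex.ofReal_sqrt_mul_star (sub_nonneg.2 hb1)]
    push_cast
    ring
  have hσ₁ : σ 1 1 = ((![f₀, f₁, f₂] y * ((1 - a) * r + b * s) : ℝ) : ℂ) := by
    simp only [hσ_diag, hρ'_diag, Fin.sum_univ_two, hρ, hU₁, hU₂, hV₁y, of_apply, cons_val',
      cons_val_zero, cons_val_one, empty_val', cons_val_fin_one]
    simp only [mul_assoc, Complex.ofReal_sqrt_mul_star hb0, Complex.ofReal_sqrt_mul_star hf,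
      Complex.ofReal_sqrt_mul_star (sub_nonneg.2 ha1)]
    push_cast
    ring
  refine ⟨?_, fun _ => ⟨by rw [hσ₀], by rw [hσ₁]⟩⟩
  rw [trace_fin_two, hσ₀, hσ₁, hN]
  push_cast
  ring

/-- Proposition 1: the quantum circuit implementation of a 2-state, 3-output
hidden Markov model recovers, on the diagonal of the normalized output density
matrix, the classical Bayesian posterior
`x_t(j|y) = P(y|j) (A x_{t-1})(j) / ∑_j P(y|j) (A x_{t-1})(j)`. -/
theorem HMM_quantum_circuit_posterior
    (a b : ℝ) (ha0 : 0 ≤ a) (ha1 : a ≤ 1) (hb0 : 0 ≤ b) (hb1 : b ≤ 1)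
    (e₀ e₁ e₂ f₀ f₁ f₂ : ℝ)
    (he₀ : 0 < e₀) (he₁ : 0 < e₁) (he₂ : 0 < e₂)
    (hf₀ : 0 < f₀) (hf₁ : 0 < f₁) (hf₂ : 0 < f₂)
    (hesum : e₀ + e₁ + e₂ = 1) (hfsum : f₀ + f₁ + f₂ = 1)
    (r s : ℝ) (hr : 0 ≤ r) (hs : 0 ≤ s) (hrs : r + s = 1) (c : ℂ)
    (ρ : Matrix (Fin 2) (Fin 2) ℂ)
    (hρ : ρ = !![(r : ℂ), c; (starRingEnd ℂ) c, (s : ℂ)])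
    (U₁ U₂ : Matrix (Fin 2) (Fin 2) ℂ)
    (hU₁ : U₁ = !![(Real.sqrt a : ℂ), (Real.sqrt (1 - a) : ℂ);
                   (Real.sqrt (1 - a) : ℂ), -(Real.sqrt a : ℂ)])
    (hU₂ : U₂ = !![(Real.sqrt (1 - b) : ℂ), (Real.sqrt b : ℂ);
                   (Real.sqrt b : ℂ), -(Real.sqrt (1 - b) : ℂ)])
    (Uhat₁ : Matrix (Fin 2 × Fin 2) (Fin 2 × Fin 2) ℂ)
    (hUhat₁ : Uhat₁ = (Matrix.single (0 : Fin 2) (0 : Fin 2) (1 : ℂ)) ⊗ₖ U₁ +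
                      (Matrix.single (1 : Fin 2) (1 : Fin 2) (1 : ℂ)) ⊗ₖ U₂)
    (V₀ V₁ : Matrix (Fin 3) (Fin 3) ℂ)
    (hV₀ : V₀ = !![((Real.sqrt e₀ : ℝ) : ℂ),
                   ((-(Real.sqrt e₁) / Real.sqrt (e₀ + e₁) : ℝ) : ℂ),
                   ((-(Real.sqrt (e₀ * e₂)) / Real.sqrt (e₀ + e₁) : ℝ) : ℂ);
                   ((Real.sqrt e₁ : ℝ) : ℂ),
                   ((Real.sqrt e₀ / Real.sqrt (e₀ + e₁) : ℝ) : ℂ),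
                   ((-(Real.sqrt (e₁ * e₂)) / Real.sqrt (e₀ + e₁) : ℝ) : ℂ);
                   ((Real.sqrt e₂ : ℝ) : ℂ), (0 : ℂ),
                   ((Real.sqrt (e₀ + e₁) : ℝ) : ℂ)])
    (hV₁ : V₁ = !![((Real.sqrt f₀ : ℝ) : ℂ),
                   ((-(Real.sqrt f₁) / Real.sqrt (f₀ + f₁) : ℝ) : ℂ),
                   ((-(Real.sqrt (f₀ * f₂)) / Real.sqrt (f₀ + f₁) : ℝ) : ℂ);
                   ((Real.sqrt f₁ : ℝ) : ℂ),
                   ((Real.sqrt f₀ / Real.sqrt (f₀ + f₁) : ℝ) : ℂ),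
                   ((-(Real.sqrt (f₁ * f₂)) / Real.sqrt (f₀ + f₁) : ℝ) : ℂ);
                   ((Real.sqrt f₂ : ℝ) : ℂ), (0 : ℂ),
                   ((Real.sqrt (f₀ + f₁) : ℝ) : ℂ)])
    (Uhat₂ : Matrix (Fin 2 × Fin 3) (Fin 2 × Fin 3) ℂ)
    (hUhat₂ : Uhat₂ = (Matrix.single (0 : Fin 2) (0 : Fin 2) (1 : ℂ)) ⊗ₖ V₀ +
                      (Matrix.single (1 : Fin 2) (1 : Fin 2) (1 : ℂ)) ⊗ₖ V₁)
    (y : Fin 3)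
    (Py : Matrix (Fin 2 × Fin 3) (Fin 2 × Fin 3) ℂ)
    (hPy : Py = (1 : Matrix (Fin 2) (Fin 2) ℂ) ⊗ₖ Matrix.single y y (1 : ℂ))
    (ρ' : Matrix (Fin 2) (Fin 2) ℂ)
    (hρ' : ρ' = fun j k => ∑ i : Fin 2,
      (Uhat₁ * (ρ ⊗ₖ Matrix.single (0 : Fin 2) (0 : Fin 2) (1 : ℂ)) * Uhat₁ᴴ)
        (i, j) (i, k))
    (σ : Matrix (Fin 2) (Fin 2) ℂ)
    (hσ : σ = fun j k => ∑ z : Fin 3,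
      (Py * (Uhat₂ * (ρ' ⊗ₖ Matrix.single (0 : Fin 3) (0 : Fin 3) (1 : ℂ)) *
        Uhat₂ᴴ) * Py) (j, z) (k, z))
    (N : ℝ)
    (hN : N = ![e₀, e₁, e₂] y * (a * r + (1 - b) * s) +
              ![f₀, f₁, f₂] y * ((1 - a) * r + b * s)) :
    σ.trace = (N : ℂ) ∧
    (0 < N →
      σ 0 0 / (N : ℂ) = ((![e₀, e₁, e₂] y * (a * r + (1 - b) * s) : ℝ) : ℂ) / (N : ℂ) ∧
      σ 1 1 / (N : ℂ) = ((![f₀, f₁, f₂] y * ((1 - a) * r + b * s) : ℝ) : ℂ) / (N : ℂ)) :=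
  HMM_quantum_circuit_posterior_general a b ha0 ha1 hb0 hb1 e₀ e₁ e₂ f₀ f₁ f₂ he₀ he₁ he₂ hf₀ hf₁
    hf₂ r s c ρ hρ U₁ U₂ hU₁ hU₂ Uhat₁ hUhat₁ V₀ V₁ hV₀ hV₁ Uhat₂ hUhat₂ y Py hPy ρ' hρ' σ hσ N hN
end

section
/- Let 0 ≤ a, b ≤ 1 and let r, s ≥ 0 be reals with r + s = 1, and c ∈ ℂ. Let ρ = !![r, c; conj c, s] be a 2×2 complex matrix. Let Û₁ = |0⟩⟨0| ⊗ U₁ + |1⟩⟨1| ⊗ U₂ on index type Fin 2 × Fin 2, with U₁ = !![√a, √(1−a); √(1−a), −√a] and U₂ = !![√(1−b), √b; √b, −√(1−b)]. Let |φ₁⟩ = (√a, √(1−a))ᵀ and |φ₂⟩ = (√(1−b), √b)ᵀ. Then Û₁ (ρ ⊗ |0⟩⟨0|) Û₁† = r·|0⟩⟨0| ⊗ |φ₁⟩⟨φ₁| + s·|1⟩⟨1| ⊗ |φ₂⟩⟨φ₂| + c·|0⟩⟨1| ⊗ |φ₁⟩⟨φ₂| + conj(c)·|1⟩⟨0| ⊗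 |φ₂⟩⟨φ₁|. -/
/-!
`Uhat₁` is the controlled unitary `∑ᵢ |i⟩⟨i| ⊗ Uᵢ`, so conjugating `ρ ⊗ σ` by it gives
`∑ᵢⱼ ρᵢⱼ |i⟩⟨j| ⊗ Uᵢ σ Uⱼ†` by the mixed-product rule. For `σ = |0⟩⟨0|` the second factor is
`|Uᵢ e₀⟩⟨Uⱼ e₀|`, and the first columns of `U₁`, `U₂` are exactly `φ₁`, `φ₂`.
-/

open Matrix Complex
open scoped Kronecker

namespace Matrix

variable {l m n R : Type*}

theorem mul_single_one_mul_conjTranspose [Fintype m] [DecidableEq m] [Semiring R] [StarRing R]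
    (A : Matrix l m R) (B : Matrix n m R) (i j : m) :
    A * single i j (1 : R) * Bᴴ = vecMulVec (A.col i) (star (B.col j)) := by
  rw [single_eq_single_vecMulVec_single, mul_vecMulVec, vecMulVec_mul]
  simp only [mulVec_single, MulOpposite.op_one, one_smul, single_vecMul]
  rfl

theorem sum_single_kronecker_mul_kronecker_mul_conjTranspose [Fintype m] [DecidableEq m]
    [Fintype n] [CommSemiring R] [StarRing R]
    (U : m → Matrix n n R) (ρ : Matrix m m R) (σ : Matrix n n R) :
    (∑ i, single i i (1 : R) ⊗ₖ U i) * (ρ ⊗ₖ σ) * (∑ i, single i i (1 : R) ⊗ₖ U i)ᴴ =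
      ∑ i, ∑ j, ρ i j • single i j (1 : R) ⊗ₖ (U i * σ * (U j)ᴴ) := by
  simp only [conjTranspose_sum, conjTranspose_kronecker, conjTranspose_single, star_one,
    Finset.sum_mul, Finset.mul_sum, ← mul_kronecker_mul, single_mul_mul_single, one_mul, mul_one]
  rw [Finset.sum_comm]
  simp only [← smul_kronecker, smul_single, smul_eq_mul, mul_one]

end Matrix

theorem transition_unitary_action_general (a b : ℝ)
    (r s : ℝ) (c : ℂ)
    (ρ : Matrix (Fin 2) (Fin 2) ℂ)
    (hρ : ρ = !![(r : ℂ), c; (starRingEnd ℂ) c, (s : ℂ)])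
    (U₁ U₂ : Matrix (Fin 2) (Fin 2) ℂ)
    (hU₁ : U₁ = !![(Real.sqrt a : ℂ), (Real.sqrt (1 - a) : ℂ);
                   (Real.sqrt (1 - a) : ℂ), -(Real.sqrt a : ℂ)])
    (hU₂ : U₂ = !![(Real.sqrt (1 - b) : ℂ), (Real.sqrt b : ℂ);
                   (Real.sqrt b : ℂ), -(Real.sqrt (1 - b) : ℂ)])
    (Uhat₁ : Matrix (Fin 2 × Fin 2) (Fin 2 × Fin 2) ℂ)
    (hUhat₁ : Uhat₁ = (Matrix.single (0 : Fin 2) (0 : Fin 2) (1 : ℂ)) ⊗ₖ U₁ +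
                      (Matrix.single (1 : Fin 2) (1 : Fin 2) (1 : ℂ)) ⊗ₖ U₂)
    (φ₁ φ₂ : Fin 2 → ℂ)
    (hφ₁ : φ₁ = ![(Real.sqrt a : ℂ), (Real.sqrt (1 - a) : ℂ)])
    (hφ₂ : φ₂ = ![(Real.sqrt (1 - b) : ℂ), (Real.sqrt b : ℂ)]) :
    Uhat₁ * (ρ ⊗ₖ Matrix.single (0 : Fin 2) (0 : Fin 2) (1 : ℂ)) * Uhat₁ᴴ =
      (r : ℂ) • (Matrix.single (0 : Fin 2) (0 : Fin 2) (1 : ℂ)) ⊗ₖ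
          vecMulVec φ₁ (star φ₁) +
      (s : ℂ) • (Matrix.single (1 : Fin 2) (1 : Fin 2) (1 : ℂ)) ⊗ₖ
          vecMulVec φ₂ (star φ₂) +
      c • (Matrix.single (0 : Fin 2) (1 : Fin 2) (1 : ℂ)) ⊗ₖ
          vecMulVec φ₁ (star φ₂) +
      (starRingEnd ℂ) c • (Matrix.single (1 : Fin 2) (0 : Fin 2) (1 : ℂ)) ⊗ₖ
          vecMulVec φ₂ (star φ₁) := by
  have hUhat : Uhat₁ = ∑ i, single i i (1 : ℂ) ⊗ₖ ![U₁, U₂] i := by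
    simp [hUhat₁, Fin.sum_univ_two]
  have hcol₁ : U₁.col 0 = φ₁ := by
    ext k; fin_cases k <;> simp [hU₁, hφ₁]
  have hcol₂ : U₂.col 0 = φ₂ := by
    ext k; fin_cases k <;> simp [hU₂, hφ₂]
  rw [hUhat, sum_single_kronecker_mul_kronecker_mul_conjTranspose]
  simp only [Fin.sum_univ_two, mul_single_one_mul_conjTranspose, hρ, of_apply, cons_val',
    cons_val_fin_one, cons_val_zero, cons_val_one, coe_smul]
  rw [hcol₁, hcol₂]
  abel

/-- Step 2 of Proposition 1: the action of the transition unitary on the joint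
state of the system and a fresh environment qubit initialized at `|0⟩⟨0|`. -/
theorem transition_unitary_action (a b : ℝ) (ha0 : 0 ≤ a) (ha1 : a ≤ 1)
    (hb0 : 0 ≤ b) (hb1 : b ≤ 1)
    (r s : ℝ) (hr : 0 ≤ r) (hs : 0 ≤ s) (hrs : r + s = 1) (c : ℂ)
    (ρ : Matrix (Fin 2) (Fin 2) ℂ)
    (hρ : ρ = !![(r : ℂ), c; (starRingEnd ℂ) c, (s : ℂ)])
    (U₁ U₂ : Matrix (Fin 2) (Fin 2) ℂ)
    (hU₁ : U₁ = !![(Real.sqrt a : ℂ), (Real.sqrt (1 - a) : ℂ);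
                   (Real.sqrt (1 - a) : ℂ), -(Real.sqrt a : ℂ)])
    (hU₂ : U₂ = !![(Real.sqrt (1 - b) : ℂ), (Real.sqrt b : ℂ);
                   (Real.sqrt b : ℂ), -(Real.sqrt (1 - b) : ℂ)])
    (Uhat₁ : Matrix (Fin 2 × Fin 2) (Fin 2 × Fin 2) ℂ)
    (hUhat₁ : Uhat₁ = (Matrix.single (0 : Fin 2) (0 : Fin 2) (1 : ℂ)) ⊗ₖ U₁ +
                      (Matrix.single (1 : Fin 2) (1 : Fin 2) (1 : ℂ)) ⊗ₖ U₂)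
    (φ₁ φ₂ : Fin 2 → ℂ)
    (hφ₁ : φ₁ = ![(Real.sqrt a : ℂ), (Real.sqrt (1 - a) : ℂ)])
    (hφ₂ : φ₂ = ![(Real.sqrt (1 - b) : ℂ), (Real.sqrt b : ℂ)]) :
    Uhat₁ * (ρ ⊗ₖ Matrix.single (0 : Fin 2) (0 : Fin 2) (1 : ℂ)) * Uhat₁ᴴ =
      (r : ℂ) • (Matrix.single (0 : Fin 2) (0 : Fin 2) (1 : ℂ)) ⊗ₖ
          vecMulVec φ₁ (star φ₁) +
      (s : ℂ) • (Matrix.single (1 : Fin 2) (1 : Fin 2) (1 : ℂ)) ⊗ₖ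
          vecMulVec φ₂ (star φ₂) +
      c • (Matrix.single (0 : Fin 2) (1 : Fin 2) (1 : ℂ)) ⊗ₖ
          vecMulVec φ₁ (star φ₂) +
      (starRingEnd ℂ) c • (Matrix.single (1 : Fin 2) (0 : Fin 2) (1 : ℂ)) ⊗ₖ
          vecMulVec φ₂ (star φ₁) :=
  transition_unitary_action_general a b r s c ρ hρ U₁ U₂ hU₁ hU₂ Uhat₁ hUhat₁ φ₁ φ₂ hφ₁ hφ₂
end
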